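/- Let 0<p<∞ and φ∈𝒢_p with φ(1)=1 and lim_{t→0+} φ(t)=0. Then 𝔈_G ℳ_{φ,p}(ℝ^n)(t) = ∞ for all t>0 if, and only if, lim_{t→∞} t^{-n/p} φ(t) = 0. -/

import Mathlib

open MeasureTheory Filter Set ENNReal

noncomputable section

abbrev En (n : ℕ) := EuclideanSpace ℝ (Fin n)

/-- The class `𝒢_p`: nondecreasing positive functions on `(0,∞)` such that
`t ↦ φ(t) t^{-n/p}` is nonincreasing. -/
def GClass (n : ℕ) (p : ℝ) (φ : ℝ → ℝ) : Prop :=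
  (∀ t : ℝ, 0 < t → 0 < φ t) ∧
    ∀ t r : ℝ, 0 < t → t ≤ r → φ t ≤ φ r ∧ φ r ≤ φ t * (r / t) ^ ((n : ℝ) / p)

/-- The axis-parallel compact cube centred at `x` with side length `r`. -/
def cube (n : ℕ) (x : En n) (r : ℝ) : Set (En n) := {y | ∀ i, |y i - x i| ≤ r / 2}

/-- The generalised Morrey quasi-norm `‖f | ℳ_{φ,p}(ℝⁿ)‖`. -/
def morreyNorm {F : Type*} [NormedAddCommGroup F] (n : ℕ) (p : ℝ) (φ : ℝ → ℝ)
    (f : En n → F) : ℝ≥0∞ :=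
  ⨆ (x : En n) (r : ℝ) (_ : 0 < r),
    ENNReal.ofReal (φ r) *
      ((volume (cube n x r))⁻¹ *
        ∫⁻ y in cube n x r, ENNReal.ofReal (‖f y‖ ^ p)) ^ (1 / p)

/-- The decreasing rearrangement `f*(t) = inf{σ>0 : |{x : |f(x)|>σ}| ≤ t}`. -/
def rearr {F : Type*} [NormedAddCommGroup F] (n : ℕ) (f : En n → F) (t : ℝ) : ℝ≥0∞ :=
  sInf {σ : ℝ≥0∞ | 0 < σ ∧ volume {x : En n | σ < ENNReal.ofReal ‖f x‖} ≤ ENNReal.ofReal t}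

/-- The growth envelope function of the generalised Morrey space `ℳ_{φ,p}(ℝⁿ)`. -/
def morreyEnvelope (n : ℕ) (p : ℝ) (φ : ℝ → ℝ) (t : ℝ) : ℝ≥0∞ :=
  ⨆ (f : En n → ℝ) (_ : Measurable f) (_ : morreyNorm n p φ f ≤ 1), rearr n f t

end

/-!
The function `g(t) = φ(t) t^{-n/p}` is nonincreasing, so either it tends to `0` or it stays above
some `c > 0`. In the second case a function of Morrey quasi-norm at most `1` satisfies
`∫_{Q(0,r)} |f|^p ≤ r^n φ(r)^{-p} ≤ c^{-p}` on every cube of side `r ≥ 1`, so by Chebyshev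
`|{|f| > 1/c}| ≤ 1`, i.e. `𝔈_G(1) ≤ 1/c`.

In the first case take `N` cubes of side `ρ` with `Nρ^n > t`, spaced along one axis so far apart
that a cube of side `r` meets at most one of them unless `r` is so large that
`g(r) (Nρ^n)^{1/p} ≤ φ(ρ)`. The height-`φ(ρ)⁻¹` indicator of their union then has quasi-norm at
most `1` (for small cubes by the `𝒢_p` bounds `φ(r) (min(r,ρ)/r)^{n/p} ≤ φ(ρ)`) and rearrangement
at least `φ(ρ)⁻¹` at `t`, which is unbounded as `ρ → 0`.
-/

section Cube

variable {n : ℕ}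

lemma cube_eq_preimage (x : En n) (r : ℝ) :
    cube n x r = (MeasurableEquiv.toLp 2 (Fin n → ℝ)).symm ⁻¹'
      Set.pi univ fun i => Icc (x i - r / 2) (x i + r / 2) := by
  ext y
  simp only [cube, mem_ofPred_eq, mem_preimage, Set.mem_pi, mem_univ, true_implies, mem_Icc,
    MeasurableEquiv.coe_toLp_symm, abs_le]
  exact forall_congr' fun i => by constructor <;> intro h <;> constructor <;> linarith [h.1, h.2]

lemma measurableSet_cube (x : En n) (r : ℝ) : MeasurableSet (cube n x r) := by
  rw [cube_eq_preimage]
  exact (MeasurableEquiv.toLp 2 (Fin n → ℝ)).symm.measurable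
    (MeasurableSet.univ_pi fun _ => measurableSet_Icc)

lemma volume_cube (x : En n) {r : ℝ} (hr : 0 ≤ r) :
    volume (cube n x r) = ENNReal.ofReal (r ^ n) := by
  rw [cube_eq_preimage,
    (EuclideanSpace.volume_preserving_symm_measurableEquiv_toLp (Fin n)).measure_preimage
      (MeasurableSet.univ_pi fun _ => measurableSet_Icc).nullMeasurableSet,
    volume_pi_pi]
  simp only [Real.volume_Icc, add_sub_sub_cancel, add_halves, Finset.prod_const,
    Finset.card_univ, Fintype.card_fin, ENNReal.ofReal_pow hr]

lemma cube_mono (x : En n) : Monotone (cube n x) :=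
  fun _ _ hrs _ hy i => (hy i).trans (by linarith)

lemma iUnion_cube_nat_succ (x : En n) : ⋃ k : ℕ, cube n x (k + 1) = univ := by
  refine eq_univ_of_forall fun y => mem_iUnion.2 ?_
  obtain ⟨k, hk⟩ := exists_nat_ge (2 * ∑ i, |y i - x i|)
  refine ⟨k, fun i => ?_⟩
  have := Finset.single_le_sum (f := fun i => |y i - x i|) (fun _ _ => abs_nonneg _)
    (Finset.mem_univ i)
  simp only at this
  linarith

lemma measure_le_of_forall_inter_cube_le {μ : Measure (En n)} {A : Set (En n)} {m : ℝ≥0∞}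
    (x : En n) (h : ∀ r ≥ 1, μ (A ∩ cube n x r) ≤ m) : μ A ≤ m := by
  have hmono : Monotone fun k : ℕ => A ∩ cube n x (k + 1) :=
    fun _ _ hkl => inter_subset_inter_right _ (cube_mono x (by gcongr))
  calc μ A = μ (⋃ k : ℕ, A ∩ cube n x (k + 1)) := by
        rw [← inter_iUnion, iUnion_cube_nat_succ, inter_univ]
    _ = ⨆ k : ℕ, μ (A ∩ cube n x (k + 1)) := hmono.measure_iUnion
    _ ≤ m := iSup_le fun k => h _ (by simp)

lemma abs_sub_le_of_inter_cube_nonempty {x y : En n} {r s : ℝ}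
    (h : (cube n x r ∩ cube n y s).Nonempty) (i : Fin n) : |x i - y i| ≤ (r + s) / 2 := by
  obtain ⟨z, hzx, hzy⟩ := h
  have hx := abs_le.1 (hzx i)
  have hy := abs_le.1 (hzy i)
  rw [abs_le]
  constructor <;> linarith [hx.1, hx.2, hy.1, hy.2]

end Cube

namespace GClass

variable {n : ℕ} {p : ℝ} {φ : ℝ → ℝ}

lemma pos (hφ : GClass n p φ) {t : ℝ} (ht : 0 < t) : 0 < φ t := hφ.1 t ht

lemma mono (hφ : GClass n p φ) {t r : ℝ} (ht : 0 < t) (htr : t ≤ r) : φ t ≤ φ r :=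
  (hφ.2 t r ht htr).1

lemma div_rpow_le (hφ : GClass n p φ) {t r : ℝ} (ht : 0 < t) (htr : t ≤ r) :
    φ r / r ^ ((n : ℝ) / p) ≤ φ t / t ^ ((n : ℝ) / p) := by
  have hr := ht.trans_le htr
  have hgrowth := (hφ.2 t r ht htr).2
  rw [Real.div_rpow hr.le ht.le] at hgrowth
  rw [div_le_div_iff₀ (by positivity) (by positivity)]
  calc φ r * t ^ ((n : ℝ) / p)
      ≤ φ t * (r ^ ((n : ℝ) / p) / t ^ ((n : ℝ) / p)) * t ^ ((n : ℝ) / p) := by gcongr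
    _ = φ t * r ^ ((n : ℝ) / p) := by field_simp

lemma mul_min_div_rpow_le (hφ : GClass n p φ) {r ρ : ℝ} (hr : 0 < r) (hρ : 0 < ρ) :
    φ r * (min r ρ / r) ^ ((n : ℝ) / p) ≤ φ ρ := by
  rcases le_total r ρ with hrρ | hρr
  · rw [min_eq_left hrρ, div_self hr.ne', Real.one_rpow, mul_one]
    exact hφ.mono hr hrρ
  · have h := hφ.div_rpow_le hρ hρr
    rw [div_le_div_iff₀ (by positivity) (by positivity)] at h
    rw [min_eq_right hρr, Real.div_rpow hρ.le hr.le, mul_div_assoc', div_le_iff₀ (by positivity)]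
    exact h

lemma exists_pos_le_of_not_tendsto (hφ : GClass n p φ)
    (h : ¬Tendsto (fun t => φ t / t ^ ((n : ℝ) / p)) atTop (nhds 0)) :
    ∃ c > 0, ∀ r ≥ 1, c * r ^ ((n : ℝ) / p) ≤ φ r := by
  by_contra! hsmall
  refine h (tendsto_order.2 ⟨fun a ha => ?_, fun ε hε => ?_⟩)
  · filter_upwards [eventually_gt_atTop 0] with t ht
    exact ha.trans_le (div_nonneg (hφ.pos ht).le (by positivity))
  · obtain ⟨r, hr, hφr⟩ := hsmall ε hε
    have hr0 : 0 < r := one_pos.trans_le hr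
    filter_upwards [eventually_ge_atTop r] with t ht
    exact (hφ.div_rpow_le hr0 ht).trans_lt ((div_lt_iff₀ (by positivity)).2 hφr)

end GClass

lemma ofReal_rpow_mul_measure_inter_le_setLIntegral {α F : Type*} [MeasurableSpace α]
    [NormedAddCommGroup F] [MeasurableSpace F] [BorelSpace F] (μ : Measure α) {f : α → F}
    (hf : Measurable f) {p σ : ℝ} (hp : 0 ≤ p) (hσ : 0 ≤ σ) (s : Set α) :
    ENNReal.ofReal (σ ^ p) * μ ({y | ENNReal.ofReal σ < ENNReal.ofReal ‖f y‖} ∩ s) ≤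
      ∫⁻ y in s, ENNReal.ofReal (‖f y‖ ^ p) ∂μ := by
  have hlevel : {y | ENNReal.ofReal σ < ENNReal.ofReal ‖f y‖} ⊆
      {y | ENNReal.ofReal (σ ^ p) ≤ ENNReal.ofReal (‖f y‖ ^ p)} := fun y hy =>
    ENNReal.ofReal_le_ofReal <|
      Real.rpow_le_rpow hσ ((ENNReal.ofReal_lt_ofReal_iff'.1 hy).1.le) hp
  calc ENNReal.ofReal (σ ^ p) * μ ({y | ENNReal.ofReal σ < ENNReal.ofReal ‖f y‖} ∩ s)
      ≤ ENNReal.ofReal (σ ^ p) *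
          μ.restrict s {y | ENNReal.ofReal (σ ^ p) ≤ ENNReal.ofReal (‖f y‖ ^ p)} := by
        gcongr ENNReal.ofReal (σ ^ p) * ?_
        exact (measure_mono (inter_subset_inter_left s hlevel)).trans
          (Measure.le_restrict_apply _ _)
    _ ≤ ∫⁻ y in s, ENNReal.ofReal (‖f y‖ ^ p) ∂μ :=
        mul_meas_ge_le_lintegral₀ (hf.norm.pow_const p).ennreal_ofReal.aemeasurable _

lemma setLIntegral_indicator_const_rpow {α : Type*} [MeasurableSpace α] (μ : Measure α)
    {U : Set α} (hU : MeasurableSet U) {p lam : ℝ} (hp : p ≠ 0) (hlam : 0 ≤ lam) (s : Set α) :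
    ∫⁻ y in s, ENNReal.ofReal (‖U.indicator (fun _ => lam) y‖ ^ p) ∂μ =
      ENNReal.ofReal (lam ^ p) * μ (s ∩ U) := by
  have hpointwise : (fun y => ENNReal.ofReal (‖U.indicator (fun _ => lam) y‖ ^ p)) =
      U.indicator fun _ => ENNReal.ofReal (lam ^ p) := by
    ext y
    by_cases hy : y ∈ U <;> simp [hy, abs_of_nonneg hlam, Real.zero_rpow hp]
  rw [hpointwise, lintegral_indicator_const hU, Measure.restrict_apply hU, inter_comm]

section Morrey

variable {n : ℕ} {p : ℝ} {φ : ℝ → ℝ}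

lemma le_morreyNorm {F : Type*} [NormedAddCommGroup F] (f : En n → F) (x : En n) {r : ℝ}
    (hr : 0 < r) :
    ENNReal.ofReal (φ r) * ((volume (cube n x r))⁻¹ *
        ∫⁻ y in cube n x r, ENNReal.ofReal (‖f y‖ ^ p)) ^ (1 / p) ≤ morreyNorm n p φ f :=
  le_iSup_of_le x (le_iSup_of_le r (le_iSup_of_le hr le_rfl))

lemma setLIntegral_cube_le_of_morreyNorm_le_one {F : Type*} [NormedAddCommGroup F]
    {f : En n → F} (hp : 0 < p) (hf : morreyNorm n p φ f ≤ 1) (x : En n) {r : ℝ} (hr : 0 < r)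
    (hφr : 0 < φ r) :
    ∫⁻ y in cube n x r, ENNReal.ofReal (‖f y‖ ^ p) ≤ ENNReal.ofReal (r ^ n / φ r ^ p) := by
  set I := ∫⁻ y in cube n x r, ENNReal.ofReal (‖f y‖ ^ p)
  have hvol := volume_cube x hr.le
  have hmean : (volume (cube n x r))⁻¹ * I ≤ ENNReal.ofReal ((φ r ^ p)⁻¹) := by
    have h := (le_morreyNorm f x hr).trans hf
    rwa [mul_comm, ← ENNReal.le_inv_iff_mul_le, one_div, ENNReal.rpow_inv_le_iff hp,
      ← ENNReal.ofReal_inv_of_pos hφr, ENNReal.ofReal_rpow_of_nonneg (by positivity) hp.le,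
      Real.inv_rpow hφr.le] at h
  rw [ENNReal.inv_mul_le_iff (by simp [hvol, hr]) (by simp [hvol])] at hmean
  rwa [hvol, ← ENNReal.ofReal_mul (by positivity), ← div_eq_mul_inv] at hmean

lemma rearr_le {F : Type*} [NormedAddCommGroup F] (f : En n → F) {σ : ℝ≥0∞} (hσ : 0 < σ)
    {t : ℝ} (h : volume {x | σ < ENNReal.ofReal ‖f x‖} ≤ ENNReal.ofReal t) : rearr n f t ≤ σ :=
  sInf_le ⟨hσ, h⟩

lemma le_rearr {F : Type*} [NormedAddCommGroup F] (f : En n → F) {σ : ℝ≥0∞} {U : Set (En n)}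
    (hU : ∀ x ∈ U, σ ≤ ENNReal.ofReal ‖f x‖) {t : ℝ} (ht : ENNReal.ofReal t < volume U) :
    σ ≤ rearr n f t := by
  refine le_sInf fun τ ⟨_, hτ⟩ => le_of_not_gt fun hτσ => ?_
  have hsub : U ⊆ {x | τ < ENNReal.ofReal ‖f x‖} := fun x hx => hτσ.trans_le (hU x hx)
  exact ((measure_mono hsub).trans hτ).not_gt ht

lemma rearr_le_morreyEnvelope {f : En n → ℝ} (hf : Measurable f)
    (hnorm : morreyNorm n p φ f ≤ 1) (t : ℝ) : rearr n f t ≤ morreyEnvelope n p φ t :=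
  le_iSup₂_of_le f hf (le_iSup_of_le hnorm le_rfl)

lemma morreyEnvelope_one_le (hp : 0 < p) (hφ : GClass n p φ) {c : ℝ} (hc : 0 < c)
    (hcφ : ∀ r ≥ 1, c * r ^ ((n : ℝ) / p) ≤ φ r) :
    morreyEnvelope n p φ 1 ≤ ENNReal.ofReal c⁻¹ := by
  refine iSup₂_le fun f hf => iSup_le fun hnorm => rearr_le f (by simpa using hc) ?_
  rw [ENNReal.ofReal_one]
  refine measure_le_of_forall_inter_cube_le 0 fun r hr => ?_
  have hr0 : 0 < r := one_pos.trans_le hr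
  have hφr := hφ.pos hr0
  have hpow : c ^ p * r ^ n ≤ φ r ^ p :=
    calc c ^ p * r ^ n = (c * r ^ ((n : ℝ) / p)) ^ p := by
          rw [Real.mul_rpow hc.le (by positivity), ← Real.rpow_mul hr0.le,
            div_mul_cancel₀ _ hp.ne', Real.rpow_natCast]
      _ ≤ φ r ^ p := Real.rpow_le_rpow (by positivity) (hcφ r hr) hp.le
  have hratio : r ^ n / φ r ^ p ≤ c⁻¹ ^ p := by
    rw [Real.inv_rpow hc.le, div_le_iff₀ (by positivity), le_inv_mul_iff₀ (by positivity)]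
    exact hpow
  have hcheb := (ofReal_rpow_mul_measure_inter_le_setLIntegral volume hf hp.le
    (inv_nonneg.2 hc.le) (cube n 0 r)).trans
    ((setLIntegral_cube_le_of_morreyNorm_le_one hp hnorm 0 hr0 hφr).trans
      (ENNReal.ofReal_le_ofReal hratio))
  exact (ENNReal.mul_le_mul_iff_right (ENNReal.ofReal_pos.2 (by positivity)).ne'
    ENNReal.ofReal_ne_top).1 (hcheb.trans_eq (mul_one _).symm)

end Morrey

def cubeRow (n : ℕ) (i : Fin n) (d ρ : ℝ) (N : ℕ) : Set (En n) :=
  ⋃ k ∈ Finset.range N, cube n (EuclideanSpace.single i ((k : ℝ) * d)) ρ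

section CubeRow

variable {n : ℕ} {i : Fin n} {d ρ : ℝ} {N : ℕ}

lemma measurableSet_cubeRow : MeasurableSet (cubeRow n i d ρ N) :=
  (Finset.range N).measurableSet_biUnion fun _ _ => measurableSet_cube _ _

lemma eq_of_abs_sub_single_lt {j k : ℕ}
    (h : |EuclideanSpace.single i ((j : ℝ) * d) i - EuclideanSpace.single i ((k : ℝ) * d) i| < d) :
    j = k := by
  have hd : 0 < d := (abs_nonneg _).trans_lt h
  rw [PiLp.single_eq_same, PiLp.single_eq_same, ← sub_mul, abs_mul, abs_of_pos hd,
    mul_lt_iff_lt_one_left hd] at h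
  obtain ⟨h₁, h₂⟩ := abs_lt.1 h
  have hjk : j < k + 1 := by exact_mod_cast (by linarith : (j : ℝ) < k + 1)
  have hkj : k < j + 1 := by exact_mod_cast (by linarith : (k : ℝ) < j + 1)
  omega

lemma pairwiseDisjoint_cube_single (hρd : ρ < d) :
    (Finset.range N : Set ℕ).PairwiseDisjoint
      fun k => cube n (EuclideanSpace.single i ((k : ℝ) * d)) ρ := by
  refine fun j _ k _ hjk => disjoint_iff_inter_eq_empty.2 <| not_nonempty_iff_eq_empty.1 fun h => ?_
  refine hjk (eq_of_abs_sub_single_lt (i := i) (d := d) ?_)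
  linarith [abs_sub_le_of_inter_cube_nonempty h i]

lemma volume_cubeRow (hρ : 0 ≤ ρ) (hρd : ρ < d) :
    volume (cubeRow n i d ρ N) = ENNReal.ofReal (N * ρ ^ n) := by
  rw [cubeRow, measure_biUnion_finset (pairwiseDisjoint_cube_single hρd)
    fun _ _ => measurableSet_cube _ _]
  simp only [volume_cube _ hρ, Finset.sum_const, Finset.card_range, nsmul_eq_mul]
  rw [ENNReal.ofReal_mul (Nat.cast_nonneg N), ENNReal.ofReal_natCast]

lemma inter_cubeRow_subset_cube {x : En n} {r : ℝ} (hrd : r + ρ < d) {k : ℕ}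
    (hk : (cube n x r ∩ cube n (EuclideanSpace.single i ((k : ℝ) * d)) ρ).Nonempty) :
    cube n x r ∩ cubeRow n i d ρ N ⊆ cube n (EuclideanSpace.single i ((k : ℝ) * d)) ρ := by
  rintro y ⟨hyx, hy⟩
  obtain ⟨j, -, hyj⟩ := mem_iUnion₂.1 hy
  obtain rfl : j = k := eq_of_abs_sub_single_lt (i := i) (d := d) <| by
    have hj := abs_sub_le_of_inter_cube_nonempty
      (show (cube n (EuclideanSpace.single i ((j : ℝ) * d)) ρ ∩ cube n x r).Nonempty
        from ⟨y, hyj, hyx⟩) i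
    have hk := abs_sub_le_of_inter_cube_nonempty hk i
    calc _ ≤ |EuclideanSpace.single i ((j : ℝ) * d) i - x i| +
          |x i - EuclideanSpace.single i ((k : ℝ) * d) i| := abs_sub_le _ _ _
      _ < d := by linarith
  exact hyj

lemma volume_inter_cubeRow_le {x : En n} {r : ℝ} (hρ : 0 ≤ ρ) (hrd : r + ρ < d) :
    volume (cube n x r ∩ cubeRow n i d ρ N) ≤ ENNReal.ofReal (ρ ^ n) := by
  rcases (cube n x r ∩ cubeRow n i d ρ N).eq_empty_or_nonempty with hempty | ⟨y, hyx, hy⟩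
  · simp [hempty]
  obtain ⟨k, -, hyk⟩ := mem_iUnion₂.1 hy
  rw [← volume_cube (EuclideanSpace.single i ((k : ℝ) * d)) hρ]
  exact measure_mono (inter_cubeRow_subset_cube hrd ⟨y, hyx, hyk⟩)

end CubeRow

section Construction

variable {n : ℕ} {p : ℝ} {φ : ℝ → ℝ}

lemma morreyNorm_indicator_const_le_one (hp : 0 < p) {U : Set (En n)} (hU : MeasurableSet U)
    {lam : ℝ} (hlam : 0 ≤ lam)
    (h : ∀ (x : En n) (r : ℝ), 0 < r → ∃ m ≥ 0, volume (cube n x r ∩ U) ≤ ENNReal.ofReal m ∧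
      φ r * lam * (m / r ^ n) ^ (1 / p) ≤ 1) :
    morreyNorm n p φ (U.indicator fun _ => lam) ≤ 1 := by
  refine iSup_le fun x => iSup₂_le fun r hr => ?_
  obtain ⟨m, hm, hvol, hbound⟩ := h x r hr
  rw [setLIntegral_indicator_const_rpow volume hU hp.ne' hlam, volume_cube x hr.le]
  have hmean : (ENNReal.ofReal (r ^ n))⁻¹ * (ENNReal.ofReal (lam ^ p) * volume (cube n x r ∩ U)) ≤
      ENNReal.ofReal (lam ^ p * (m / r ^ n)) := by
    calc _ ≤ (ENNReal.ofReal (r ^ n))⁻¹ * (ENNReal.ofReal (lam ^ p) * ENNReal.ofReal m) := by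
          gcongr
      _ = ENNReal.ofReal (lam ^ p * (m / r ^ n)) := by
          rw [← ENNReal.ofReal_inv_of_pos (by positivity), ← ENNReal.ofReal_mul (by positivity),
            ← ENNReal.ofReal_mul (by positivity), div_eq_mul_inv]
          ring_nf
  calc _ ≤ ENNReal.ofReal (φ r) * ENNReal.ofReal (lam ^ p * (m / r ^ n)) ^ (1 / p) := by
        gcongr
    _ = ENNReal.ofReal (φ r * lam * (m / r ^ n) ^ (1 / p)) := by
        rw [ENNReal.ofReal_rpow_of_nonneg (by positivity) (by positivity),
          Real.mul_rpow (by positivity) (by positivity), one_div, Real.rpow_rpow_inv hlam hp.ne',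
          mul_assoc (φ r)]
        exact (ENNReal.ofReal_mul' (by positivity)).symm
    _ ≤ 1 := ENNReal.ofReal_le_one.2 hbound

lemma morreyNorm_indicator_cubeRow_le_one (hp : 0 < p) (hφ : GClass n p φ) (i : Fin n)
    {ρ R : ℝ} (hρ : 0 < ρ) (hR : 0 < R) (N : ℕ)
    (hlarge : ∀ r ≥ R, φ r / r ^ ((n : ℝ) / p) * (N * ρ ^ n) ^ (1 / p) ≤ φ ρ) :
    morreyNorm n p φ ((cubeRow n i (R + ρ) ρ N).indicator fun _ => (φ ρ)⁻¹) ≤ 1 := by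
  have hφρ := hφ.pos hρ
  refine morreyNorm_indicator_const_le_one hp measurableSet_cubeRow (by positivity)
    fun x r hr => ?_
  rcases lt_or_ge r R with hrR | hRr
  · refine ⟨min r ρ ^ n, by positivity, ?_, ?_⟩
    · rcases min_cases r ρ with ⟨hmin, -⟩ | ⟨hmin, -⟩ <;> rw [hmin]
      · exact (measure_mono inter_subset_left).trans (volume_cube x hr.le).le
      · exact volume_inter_cubeRow_le hρ.le (by linarith)
    · rw [← div_pow, ← Real.rpow_natCast_mul (by positivity), mul_one_div, mul_right_comm,
        ← div_eq_mul_inv, div_le_one hφρ]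
      exact hφ.mul_min_div_rpow_le hr hρ
  · refine ⟨N * ρ ^ n, by positivity, ?_, ?_⟩
    · rw [← volume_cubeRow (i := i) hρ.le (lt_add_of_pos_left ρ hR)]
      exact measure_mono inter_subset_right
    · rw [Real.div_rpow (by positivity) (by positivity), ← Real.rpow_natCast_mul hr.le,
        mul_one_div, mul_right_comm, ← div_eq_mul_inv, div_le_one hφρ]
      exact (le_of_eq (by ring)).trans (hlarge r hRr)

lemma inv_le_morreyEnvelope (hn : 0 < n) (hp : 0 < p) (hφ : GClass n p φ)
    (hlim : Tendsto (fun t : ℝ => φ t / t ^ ((n : ℝ) / p)) atTop (nhds 0)) {ρ : ℝ} (hρ : 0 < ρ)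
    {t : ℝ} (ht : 0 ≤ t) : ENNReal.ofReal (φ ρ)⁻¹ ≤ morreyEnvelope n p φ t := by
  obtain ⟨N, hN⟩ := exists_nat_gt (t / ρ ^ n)
  have htN : t < N * ρ ^ n := (div_lt_iff₀ (by positivity)).1 hN
  obtain ⟨R, hR⟩ := eventually_atTop.1 <|
    (hlim.mul_const (((N : ℝ) * ρ ^ n) ^ (1 / p))).eventually_lt_const
      (by simpa using hφ.pos hρ)
  set U := cubeRow n ⟨0, hn⟩ (max R 1 + ρ) ρ N
  have hnorm := morreyNorm_indicator_cubeRow_le_one hp hφ ⟨0, hn⟩ hρ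
    (zero_lt_one.trans_le (le_max_right R 1)) N fun r hr => (hR r (le_of_max_le_left hr)).le
  refine (le_rearr (U.indicator fun _ => (φ ρ)⁻¹) (U := U) (fun x hx => ?_) ?_).trans
    (rearr_le_morreyEnvelope (measurable_const.indicator measurableSet_cubeRow) hnorm t)
  · rw [indicator_of_mem hx, Real.norm_of_nonneg (inv_nonneg.2 (hφ.pos hρ).le)]
  · rw [volume_cubeRow hρ.le (by linarith [le_max_right R 1])]
    exact ENNReal.ofReal_lt_ofReal_iff'.2 ⟨htN, ht.trans_lt htN⟩

end Construction

theorem statement6_general (n : ℕ) (hn : 0 < n) (p : ℝ) (hp : 0 < p) (φ : ℝ → ℝ)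
    (hφ : GClass n p φ)
    (hφ0 : Filter.Tendsto φ (nhdsWithin 0 (Set.Ioi 0)) (nhds 0)) :
    (∀ t : ℝ, 0 < t → morreyEnvelope n p φ t = ⊤) ↔
      Filter.Tendsto (fun t : ℝ => φ t / t ^ ((n : ℝ) / p)) Filter.atTop (nhds 0) := by
  constructor
  · intro htop
    by_contra hlim
    obtain ⟨c, hc, hcφ⟩ := hφ.exists_pos_le_of_not_tendsto hlim
    have hfinite := morreyEnvelope_one_le hp hφ hc hcφ
    rw [htop 1 one_pos, top_le_iff] at hfinite
    exact ENNReal.ofReal_ne_top hfinite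
  · intro hlim t ht
    have hinv : Tendsto (fun ρ => (φ ρ)⁻¹) (nhdsWithin 0 (Ioi 0)) atTop :=
      (tendsto_nhdsWithin_iff.2 ⟨hφ0, eventually_nhdsWithin_of_forall fun _ hρ => hφ.pos hρ⟩)
        |>.inv_tendsto_nhdsGT_zero
    refine ENNReal.eq_top_of_forall_nnreal_le fun M => ?_
    obtain ⟨ρ, hMρ, hρ⟩ := ((tendsto_atTop.1 hinv M).and self_mem_nhdsWithin).exists
    calc (M : ℝ≥0∞) = ENNReal.ofReal M := (ENNReal.ofReal_coe_nnreal).symm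
      _ ≤ ENNReal.ofReal (φ ρ)⁻¹ := ENNReal.ofReal_le_ofReal hMρ
      _ ≤ morreyEnvelope n p φ t := inv_le_morreyEnvelope hn hp hφ hlim hρ ht.le

/-- If `lim_{t→0⁺} φ(t)=0`, then the growth envelope function of
`ℳ_{φ,p}(ℝⁿ)` is identically `∞` on `(0,∞)` iff `lim_{t→∞} t^{-n/p} φ(t) = 0`. -/
theorem statement6 (n : ℕ) (hn : 0 < n) (p : ℝ) (hp : 0 < p) (φ : ℝ → ℝ)
    (hφ : GClass n p φ) (hφ1 : φ 1 = 1)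
    (hφ0 : Filter.Tendsto φ (nhdsWithin 0 (Set.Ioi 0)) (nhds 0)) :
    (∀ t : ℝ, 0 < t → morreyEnvelope n p φ t = ⊤) ↔
      Filter.Tendsto (fun t : ℝ => φ t / t ^ ((n : ℝ) / p)) Filter.atTop (nhds 0) :=
  statement6_general n hn p hp φ hφ hφ0
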